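/- arXiv:2411.18195 — 5 statements merged into one kernel-verified Lean document; each statement's English description precedes it below -/
import Mathlib

section
/- For all λ ∈ [0,1] and all vectors v, v' ∈ ℝ^d, if v λ-Lorenz dominates v', then v Lorenz dominates v'. -/
/-- The vector `v` sorted in increasing order. -/
noncomputable def sortVec {d : ℕ} (v : Fin d → ℝ) : Fin d → ℝ := v ∘ Tuple.sort v

/-- The Lorenz vector of `v`: cumulative sums of the sorted vector. -/
noncomputable def lorenzVec {d : ℕ} (v : Fin d → ℝ) : Fin d → ℝ :=
  fun k => ∑ i ∈ Finset.Iic k, sortVec v i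

/-- Pareto dominance: componentwise at least, and not equal. -/
def ParetoDom {d : ℕ} (u w : Fin d → ℝ) : Prop :=
  (∀ j, w j ≤ u j) ∧ u ≠ w

/-- Lorenz dominance. -/
def LorenzDom {d : ℕ} (v v' : Fin d → ℝ) : Prop :=
  ParetoDom (lorenzVec v) (lorenzVec v')

/-- λ-Lorenz dominance. -/
def LambdaLorenzDom {d : ℕ} (l : ℝ) (v v' : Fin d → ℝ) : Prop :=
  ParetoDom (fun k => l * sortVec v k + (1 - l) * lorenzVec v k)
            (fun k => l * sortVec v' k + (1 - l) * lorenzVec v' k)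

theorem lambdaLorenz_implies_lorenz {d : ℕ} (l : ℝ) (hl : l ∈ Set.Icc (0 : ℝ) 1)
    (v v' : Fin d → ℝ) (h : LambdaLorenzDom l v v') : LorenzDom v v' := by
  obtain ⟨hc, hne⟩ := h
  obtain ⟨hl0, hl1⟩ := hl
  set S : (Fin d → ℝ) → Fin d → ℝ := fun w k => ∑ i ∈ Finset.Iio k, sortVec w i with hS
  have hLS : ∀ (w : Fin d → ℝ) (k : Fin d), lorenzVec w k = sortVec w k + S w k := by
    intro w k
    rw [lorenzVec, hS]
    have hnm : k ∉ Finset.Iio k := by simp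
    rw [← Finset.sum_insert hnm]
    congr 1
    ext i
    simp [Finset.mem_Iio, Finset.mem_Iic, le_iff_lt_or_eq, or_comm]
  have hcases : ∀ k : Fin d, Finset.Iio k = ∅ ∨
      ∃ k' : Fin d, Finset.Iio k = Finset.Iic k' ∧ (k' : ℕ) < (k : ℕ) := by
    intro k
    rcases Nat.eq_zero_or_pos k.val with h0 | hp
    · left; ext i
      simp only [Finset.mem_Iio, Finset.notMem_empty, iff_false, not_lt, Fin.le_def, Fin.lt_def]
      omega
    · right
      refine ⟨⟨k.val - 1, by omega⟩, ?_, Nat.sub_lt hp one_pos⟩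
      ext i
      simp only [Finset.mem_Iio, Finset.mem_Iic, Fin.lt_def, Fin.le_def]
      omega
  have step : ∀ k, S v' k ≤ S v k → lorenzVec v' k ≤ lorenzVec v k := by
    intro k hSk
    have h1 : l * sortVec v' k + (1 - l) * lorenzVec v' k ≤
        l * sortVec v k + (1 - l) * lorenzVec v k := hc k
    have h2 := hLS v k
    have h3 := hLS v' k
    nlinarith [mul_le_mul_of_nonneg_left hSk hl0]
  have main : ∀ n : ℕ, ∀ k : Fin d, (k : ℕ) < n → lorenzVec v' k ≤ lorenzVec v k := by
    intro n
    induction n with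
    | zero => intro k hk; omega
    | succ n ih =>
      intro k hk
      apply step
      rcases hcases k with he | ⟨k', hk', hklt⟩
      · simp [hS, he]
      · have hle := ih k' (by omega)
        simp only [hS, hk']
        exact hle
  refine ⟨fun j => main d j j.isLt, ?_⟩
  intro heq
  have hσ : sortVec v = sortVec v' := by
    funext k
    have h2 := hLS v k
    have h3 := hLS v' k
    have hSeq : S v k = S v' k := by
      rcases hcases k with he | ⟨k', hk', hklt⟩
      · simp [hS, he]
      · simp only [hS, hk']
        show lorenzVec v k' = lorenzVec v' k'
        rw [heq]
    rw [heq] at h2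
    linarith
  exact hne (by funext k; rw [hσ, heq])
end

section
/- For all λ₁, λ₂ with 0 ≤ λ₁ ≤ λ₂ ≤ 1 and all vectors v, v' ∈ ℝ^d, if v λ₂-Lorenz dominates v', then v λ₁-Lorenz dominates v'. -/
theorem lambdaLorenz_mono {d : ℕ} (l₁ l₂ : ℝ) (h0 : 0 ≤ l₁) (h12 : l₁ ≤ l₂) (h1 : l₂ ≤ 1)
    (v v' : Fin d → ℝ) (h : LambdaLorenzDom l₂ v v') : LambdaLorenzDom l₁ v v' := by
  obtain ⟨hle, hne⟩ := h
  set s := sortVec v with hs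
  set s' := sortVec v' with hs'
  set P : Fin d → ℝ := fun k => (∑ i ∈ Finset.Iio k, s i) - (∑ i ∈ Finset.Iio k, s' i)
    with hPdef
  set D : Fin d → ℝ := fun k => lorenzVec v k - lorenzVec v' k with hDdef
  have hL : ∀ k, lorenzVec v k = (∑ i ∈ Finset.Iio k, s i) + s k := by
    intro k
    rw [lorenzVec, ← Finset.Iio_insert, Finset.sum_insert (by simp)]
    rw [← hs]; ring
  have hL' : ∀ k, lorenzVec v' k = (∑ i ∈ Finset.Iio k, s' i) + s' k := by
    intro k
    rw [lorenzVec, ← Finset.Iio_insert, Finset.sum_insert (by simp)]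
    rw [← hs']; ring
  have key : ∀ (l : ℝ) (k : Fin d),
      (l * s k + (1 - l) * lorenzVec v k) - (l * s' k + (1 - l) * lorenzVec v' k)
        = D k - l * P k := by
    intro l k
    simp only [hDdef, hPdef, hL k, hL' k]
    ring
  have hB : ∀ k, 0 ≤ D k - l₂ * P k := by
    intro k
    rw [← key]
    have := hle k
    simp only at this
    linarith
  -- P is nonnegative, by strong induction on the index
  have hP : ∀ n : ℕ, ∀ k : Fin d, k.val = n → 0 ≤ P k := by
    intro n
    induction n using Nat.strong_induction_on with
    | _ n ih =>
      intro k hk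
      match n, hk with
      | 0, hk =>
        have : Finset.Iio k = ∅ := by
          ext i; simp [Fin.lt_def, hk]
        simp [hPdef, this]
      | Nat.succ m, hk =>
        have hm : m < d := by omega
        set j : Fin d := ⟨m, hm⟩ with hj
        have hIio : Finset.Iio k = Finset.Iic j := by
          ext i
          simp only [Finset.mem_Iio, Finset.mem_Iic, Fin.lt_def, Fin.le_def, hk, hj]
          omega
        have hPk : P k = D j := by
          simp only [hPdef, hDdef, hIio, lorenzVec, ← hs, ← hs']
        have hjlt : j < k := by simp [Fin.lt_def, hj, hk]
        have hPj : 0 ≤ P j := ih m (by omega) j rfl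
        have := hB j
        have : 0 ≤ D j := by nlinarith
        linarith [hPk ▸ this]
  have hP' : ∀ k, 0 ≤ P k := fun k => hP k.val k rfl
  constructor
  · intro k
    simp only
    have h2 := hB k
    have h3 := mul_nonneg (sub_nonneg.2 h12) (hP' k)
    have h4 := key l₁ k
    linarith
  · intro heq
    apply hne
    funext k
    have h5 : D k - l₁ * P k = 0 := by
      have := congrFun heq k
      have h4 := key l₁ k
      linarith
    have h2 := hB k
    have h3 := mul_nonneg (sub_nonneg.2 h12) (hP' k)
    have h6 : D k - l₂ * P k = 0 := by nlinarith
    have h4 := key l₂ k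
    linarith
end

section
/- For all λ ∈ [0,1] and all vectors v, v' ∈ ℝ^d, if v Pareto dominates v', then v λ-Lorenz dominates v'. -/
open Finset

theorem paretoDom_iff_lt {d : ℕ} {u w : Fin d → ℝ} : ParetoDom u w ↔ w < u := by
  rw [lt_iff_le_and_ne, ParetoDom, Pi.le_def, ne_comm]

theorem card_filter_perm_apply {α : Type*} [Fintype α] (σ : Equiv.Perm α) (p : α → Prop)
    [DecidablePred p] : #{i | p (σ i)} = #{i | p i} := by
  simp only [← Fintype.card_subtype]
  exact Fintype.card_congr (σ.subtypeEquiv fun _ => Iff.rfl)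

theorem sortVec_le_iff_lt_card {d : ℕ} (v : Fin d → ℝ) (k : Fin d) (a : ℝ) :
    sortVec v k ≤ a ↔ (k : ℕ) < #{j | v j ≤ a} := by
  rw [← card_filter_perm_apply (Tuple.sort v)]
  exact (Tuple.lt_card_le_iff_apply_le_of_monotone (Tuple.monotone_sort v)).symm

theorem sortVec_mono {d : ℕ} : Monotone (sortVec (d := d)) := by
  intro v' v h k
  rw [sortVec_le_iff_lt_card]
  calc (k : ℕ) < #{j | v j ≤ sortVec v k} := (sortVec_le_iff_lt_card v k _).1 le_rfl
    _ ≤ #{j | v' j ≤ sortVec v k} :=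
      card_le_card (monotone_filter_right _ fun j _ hj => (h j).trans hj)

theorem sum_sortVec {d : ℕ} (v : Fin d → ℝ) : ∑ i, sortVec v i = ∑ i, v i :=
  Equiv.sum_comp (Tuple.sort v) v

theorem sortVec_strictMono {d : ℕ} : StrictMono (sortVec (d := d)) := by
  intro v' v h
  refine lt_of_le_of_ne (sortVec_mono h.le) fun heq => ?_
  have hsum : ∑ i, v' i < ∑ i, v i := Fintype.sum_strictMono h
  rw [← sum_sortVec, ← sum_sortVec v, heq] at hsum
  exact lt_irrefl _ hsum

theorem lorenzVec_last {n : ℕ} (v : Fin (n + 1) → ℝ) : lorenzVec v (Fin.last n) = ∑ i, v i := by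
  rw [lorenzVec, ← Fin.top_eq_last, Iic_top, sum_sortVec]

theorem lorenzVec_strictMono {d : ℕ} : StrictMono (lorenzVec (d := d)) := by
  intro v' v h
  cases d with
  | zero => exact absurd (Subsingleton.elim v' v) h.ne
  | succ n =>
    refine Pi.lt_def.2 ⟨fun k => sum_le_sum fun i _ => sortVec_mono h.le i, Fin.last n, ?_⟩
    rw [lorenzVec_last, lorenzVec_last]
    exact Fintype.sum_strictMono h

theorem convexComb_lt_convexComb {E : Type*} [AddCommGroup E] [PartialOrder E]
    [IsOrderedAddMonoid E] [Module ℝ E] [PosSMulStrictMono ℝ E] {l : ℝ} (hl : l ∈ Set.Icc 0 1)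
    {a b c e : E} (hab : a < b) (hce : c < e) : l • a + (1 - l) • c < l • b + (1 - l) • e := by
  obtain ⟨hl0, hl1⟩ := hl
  rcases hl0.lt_or_eq with hpos | rfl
  · exact add_lt_add_of_lt_of_le (smul_lt_smul_of_pos_left hab hpos)
      (smul_le_smul_of_nonneg_left hce.le (sub_nonneg.2 hl1))
  · simpa using hce

theorem pareto_implies_lambdaLorenz {d : ℕ} (l : ℝ) (hl : l ∈ Set.Icc (0 : ℝ) 1)
    (v v' : Fin d → ℝ) (h : ParetoDom v v') : LambdaLorenzDom l v v' := by
  rw [paretoDom_iff_lt] at h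
  rw [LambdaLorenzDom, paretoDom_iff_lt]
  exact convexComb_lt_convexComb hl (sortVec_strictMono h) (lorenzVec_strictMono h)
end

section
/- For any finite set D ⊂ ℝ^d and any λ₁, λ₂ with 0 ≤ λ₁ ≤ λ₂ ≤ 1, the nondominated fronts are nested: the Lorenz front of D is contained in the λ₁-Lorenz front of D, which is contained in the λ₂-Lorenz front of D, which is contained in the Pareto front of D. -/
/-- The nondominated front of `D` under a dominance relation `r`. -/
def front {d : ℕ} (r : (Fin d → ℝ) → (Fin d → ℝ) → Prop) (D : Set (Fin d → ℝ)) :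
    Set (Fin d → ℝ) :=
  {v ∈ D | ¬ ∃ v' ∈ D, r v' v}

lemma sortVec_le {d : ℕ} {v v' : Fin d → ℝ} (h : ∀ j, v j ≤ v' j) (k : Fin d) :
    sortVec v k ≤ sortVec v' k := by
  by_contra hlt
  push_neg at hlt
  set τ := Tuple.sort v' with hτ
  set π := Tuple.sort v with hπ
  set B := (Finset.Iic k).map τ.toEmbedding with hB
  set C := (Finset.Ici k).map π.toEmbedding with hC
  have hBC : (B ∩ C).Nonempty := by
    rw [← Finset.card_pos]
    have h1 : B.card = k.val + 1 := by simp [hB, Fin.card_Iic]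
    have h2 : C.card = d - k.val := by simp [hC, Fin.card_Ici]
    have h3 := Finset.card_union_add_card_inter B C
    have h4 : (B ∪ C).card ≤ d := by
      simpa using Finset.card_le_univ (B ∪ C)
    have hk := k.isLt
    omega
  obtain ⟨i, hi⟩ := hBC
  rw [Finset.mem_inter] at hi
  obtain ⟨j, hj, hji⟩ := Finset.mem_map.mp hi.1
  obtain ⟨j', hj', hj'i⟩ := Finset.mem_map.mp hi.2
  have h5 : v' i ≤ sortVec v' k := by
    rw [← hji]
    exact Tuple.monotone_sort v' (Finset.mem_Iic.mp hj)
  have h6 : sortVec v k ≤ v i := by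
    rw [← hj'i]
    exact Tuple.monotone_sort v (Finset.mem_Ici.mp hj')
  have := h i
  linarith

lemma lorenz_zero {d : ℕ} (v : Fin d → ℝ) (h : 0 < d) :
    lorenzVec v ⟨0, h⟩ = sortVec v ⟨0, h⟩ := by
  have : Finset.Iic (⟨0, h⟩ : Fin d) = {⟨0, h⟩} := by
    ext i
    simp [Fin.le_def, Nat.le_zero, Fin.ext_iff]
  rw [lorenzVec, this, Finset.sum_singleton]

lemma lorenz_succ {d n : ℕ} (v : Fin d → ℝ) (h : n + 1 < d) :
    lorenzVec v ⟨n+1, h⟩ = lorenzVec v ⟨n, by omega⟩ + sortVec v ⟨n+1, h⟩ := by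
  have hins : Finset.Iic (⟨n+1, h⟩ : Fin d)
      = insert ⟨n+1, h⟩ (Finset.Iic (⟨n, by omega⟩ : Fin d)) := by
    ext i
    simp only [Finset.mem_Iic, Finset.mem_insert, Fin.le_def, Fin.ext_iff]
    omega
  have hnot : (⟨n+1, h⟩ : Fin d) ∉ Finset.Iic (⟨n, by omega⟩ : Fin d) := by
    simp [Fin.le_def]
  rw [lorenzVec, hins, Finset.sum_insert hnot]
  simp [lorenzVec]
  ring

lemma lorenz_le_of_comb {d : ℕ} {l : ℝ} (hl : 0 ≤ l) {v v' : Fin d → ℝ}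
    (h : ∀ k, l * sortVec v k + (1-l) * lorenzVec v k
        ≤ l * sortVec v' k + (1-l) * lorenzVec v' k) :
    ∀ k, lorenzVec v k ≤ lorenzVec v' k := by
  have main : ∀ n (hn : n < d), lorenzVec v ⟨n, hn⟩ ≤ lorenzVec v' ⟨n, hn⟩ := by
    intro n
    induction n with
    | zero =>
      intro hn
      have h0 := h ⟨0, hn⟩
      rw [lorenz_zero v hn, lorenz_zero v' hn] at h0 ⊢
      linarith
    | succ m ih =>
      intro hn
      have hm : m < d := by omega
      have hk := h ⟨m+1, hn⟩
      have hs1 : sortVec v ⟨m+1, hn⟩ = lorenzVec v ⟨m+1, hn⟩ - lorenzVec v ⟨m, hm⟩ := by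
        rw [lorenz_succ v hn]; ring
      have hs2 : sortVec v' ⟨m+1, hn⟩ = lorenzVec v' ⟨m+1, hn⟩ - lorenzVec v' ⟨m, hm⟩ := by
        rw [lorenz_succ v' hn]; ring
      rw [hs1, hs2] at hk
      have hmul := mul_le_mul_of_nonneg_left (ih hm) hl
      nlinarith [hk, hmul]
  intro k
  have := main k.val k.isLt
  simpa using this

lemma lorenz_eq_of_comb {d : ℕ} {l : ℝ} {v v' : Fin d → ℝ}
    (h : ∀ k, l * sortVec v k + (1-l) * lorenzVec v k
        = l * sortVec v' k + (1-l) * lorenzVec v' k) :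
    ∀ k, lorenzVec v k = lorenzVec v' k := by
  have main : ∀ n (hn : n < d), lorenzVec v ⟨n, hn⟩ = lorenzVec v' ⟨n, hn⟩ := by
    intro n
    induction n with
    | zero =>
      intro hn
      have h0 := h ⟨0, hn⟩
      rw [lorenz_zero v hn, lorenz_zero v' hn] at h0 ⊢
      linarith
    | succ m ih =>
      intro hn
      have hm : m < d := by omega
      have hk := h ⟨m+1, hn⟩
      have hs1 : sortVec v ⟨m+1, hn⟩ = lorenzVec v ⟨m+1, hn⟩ - lorenzVec v ⟨m, hm⟩ := by
        rw [lorenz_succ v hn]; ring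
      have hs2 : sortVec v' ⟨m+1, hn⟩ = lorenzVec v' ⟨m+1, hn⟩ - lorenzVec v' ⟨m, hm⟩ := by
        rw [lorenz_succ v' hn]; ring
      rw [hs1, hs2] at hk
      have hmul : l * lorenzVec v ⟨m, hm⟩ = l * lorenzVec v' ⟨m, hm⟩ :=
        congrArg (l * ·) (ih hm)
      nlinarith [hk, hmul]
  intro k
  have := main k.val k.isLt
  simpa using this

lemma sort_eq_of_lorenz_eq {d : ℕ} {v v' : Fin d → ℝ}
    (h : ∀ k, lorenzVec v k = lorenzVec v' k) :
    ∀ k, sortVec v k = sortVec v' k := by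
  rintro ⟨n, hn⟩
  cases n with
  | zero =>
    rw [← lorenz_zero v hn, ← lorenz_zero v' hn]
    exact h _
  | succ m =>
    have hm : m < d := by omega
    have e1 := lorenz_succ v hn
    have e2 := lorenz_succ v' hn
    have h1 := h ⟨m+1, hn⟩
    have h2 := h ⟨m, hm⟩
    linarith

lemma lambda_imp_lorenz {d : ℕ} {l : ℝ} (h0 : 0 ≤ l) {v v' : Fin d → ℝ}
    (h : LambdaLorenzDom l v' v) : LorenzDom v' v := by
  obtain ⟨hle, hne⟩ := h
  refine ⟨lorenz_le_of_comb h0 (fun k => hle k), ?_⟩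
  intro heq
  apply hne
  funext k
  have hL : ∀ k, lorenzVec v' k = lorenzVec v k := fun k => congrFun heq k
  have hS := sort_eq_of_lorenz_eq hL
  simp only [hS k, hL k]

lemma lambda_mono_dom {d : ℕ} {l₁ l₂ : ℝ} (h0 : 0 ≤ l₁) (h12 : l₁ ≤ l₂)
    {v v' : Fin d → ℝ} (h : LambdaLorenzDom l₂ v' v) : LambdaLorenzDom l₁ v' v := by
  obtain ⟨hle, hne⟩ := h
  have hl2 : 0 ≤ l₂ := le_trans h0 h12
  have hL := lorenz_le_of_comb hl2 (fun k => hle k)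
  constructor
  · rintro ⟨n, hn⟩
    cases n with
    | zero =>
      have h := hle ⟨0, hn⟩
      simp only at h ⊢
      rw [lorenz_zero v hn, lorenz_zero v' hn] at h ⊢
      nlinarith [h]
    | succ m =>
      have hm : m < d := by omega
      have h := hle ⟨m+1, hn⟩
      simp only at h ⊢
      have hs1 : sortVec v ⟨m+1, hn⟩ = lorenzVec v ⟨m+1, hn⟩ - lorenzVec v ⟨m, hm⟩ := by
        rw [lorenz_succ v hn]; ring
      have hs2 : sortVec v' ⟨m+1, hn⟩ = lorenzVec v' ⟨m+1, hn⟩ - lorenzVec v' ⟨m, hm⟩ := by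
        rw [lorenz_succ v' hn]; ring
      rw [hs1, hs2] at h ⊢
      have hmul := mul_le_mul_of_nonneg_left (hL ⟨m, hm⟩) (sub_nonneg.mpr h12)
      nlinarith [h, hmul]
  · intro heq
    apply hne
    funext k
    have hLeq := lorenz_eq_of_comb (fun k => congrFun heq k)
    have hSeq := sort_eq_of_lorenz_eq hLeq
    simp only [hSeq k, hLeq k]

lemma pareto_imp_lambda {d : ℕ} {l : ℝ} (h0 : 0 ≤ l) (h1 : l ≤ 1)
    {v v' : Fin d → ℝ} (h : ParetoDom v' v) : LambdaLorenzDom l v' v := by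
  obtain ⟨hle, hne⟩ := h
  have hS : ∀ k, sortVec v k ≤ sortVec v' k := sortVec_le hle
  have hL : ∀ k, lorenzVec v k ≤ lorenzVec v' k := fun k =>
    Finset.sum_le_sum (fun i _ => hS i)
  have h1' : (0:ℝ) ≤ 1 - l := by linarith
  constructor
  · intro k
    exact add_le_add (mul_le_mul_of_nonneg_left (hS k) h0)
      (mul_le_mul_of_nonneg_left (hL k) h1')
  · intro heq
    rcases Nat.eq_zero_or_pos d with hd | hd
    · subst hd
      exact hne (funext fun i => i.elim0)
    obtain ⟨j, hj⟩ := Function.ne_iff.mp hne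
    have hjlt : v j < v' j := lt_of_le_of_ne (hle j) (Ne.symm hj)
    have hsum : ∑ i, v i < ∑ i, v' i :=
      Finset.sum_lt_sum (fun i _ => hle i) ⟨j, Finset.mem_univ j, hjlt⟩
    have hsv : ∑ k, sortVec v k = ∑ i, v i := Equiv.sum_comp (Tuple.sort v) v
    have hsv' : ∑ k, sortVec v' k = ∑ i, v' i := Equiv.sum_comp (Tuple.sort v') v'
    have hA : ∑ k, sortVec v k < ∑ k, sortVec v' k := by rw [hsv, hsv']; exact hsum
    set ktop : Fin d := ⟨d - 1, by omega⟩ with hktop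
    have huniv : Finset.Iic ktop = Finset.univ := by
      ext i
      simp only [Finset.mem_Iic, Finset.mem_univ, iff_true, Fin.le_def]
      have := i.isLt
      show i.val ≤ d - 1
      omega
    have hLtop : ∀ w : Fin d → ℝ, lorenzVec w ktop = ∑ k, sortVec w k := by
      intro w; rw [lorenzVec, huniv]
    have hLstrict : lorenzVec v ktop < lorenzVec v' ktop := by
      rw [hLtop, hLtop]; exact hA
    have hB : ∑ k, lorenzVec v k < ∑ k, lorenzVec v' k :=
      Finset.sum_lt_sum (fun i _ => hL i) ⟨ktop, Finset.mem_univ ktop, hLstrict⟩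
    have hsumeq := congrArg (fun f => ∑ k, f k) heq
    simp only [Finset.sum_add_distrib, ← Finset.mul_sum] at hsumeq
    rcases eq_or_lt_of_le h1 with hl1 | hl1
    · rw [hl1] at hsumeq
      simp only [one_mul, sub_self, zero_mul, add_zero] at hsumeq
      linarith
    · have hpos : (0:ℝ) < 1 - l := by linarith
      nlinarith [mul_le_mul_of_nonneg_left hA.le h0,
        mul_lt_mul_of_pos_left hB hpos, hsumeq]

lemma front_subset {d : ℕ} {r r' : (Fin d → ℝ) → (Fin d → ℝ) → Prop}
    (h : ∀ v v' : Fin d → ℝ, r' v' v → r v' v) (D : Set (Fin d → ℝ)) :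
    front r D ⊆ front r' D := by
  intro v hv
  obtain ⟨hvD, hnd⟩ := hv
  refine ⟨hvD, fun hc => hnd ?_⟩
  obtain ⟨v', hv'D, hr'⟩ := hc
  exact ⟨v', hv'D, h v v' hr'⟩

theorem fronts_nested {d : ℕ} (D : Set (Fin d → ℝ)) (hD : D.Finite)
    (l₁ l₂ : ℝ) (h0 : 0 ≤ l₁) (h12 : l₁ ≤ l₂) (h1 : l₂ ≤ 1) :
    front LorenzDom D ⊆ front (LambdaLorenzDom l₁) D ∧
    front (LambdaLorenzDom l₁) D ⊆ front (LambdaLorenzDom l₂) D ∧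
    front (LambdaLorenzDom l₂) D ⊆ front ParetoDom D := by
  have hl2 : 0 ≤ l₂ := le_trans h0 h12
  exact ⟨front_subset (fun v v' hr => lambda_imp_lorenz h0 hr) D,
    front_subset (fun v v' hr => lambda_mono_dom h0 h12 hr) D,
    front_subset (fun v v' hr => pareto_imp_lambda hl2 h1 hr) D⟩
end

section
/- Pigou-Dalton transfers produce Lorenz dominance: let v ∈ ℝ^d with v_i > v_j for some indices i ≠ j, and let 0 < ε < v_i − v_j. Define v' by v'_i = v_i − ε, v'_j = v_j + ε, and v'_k = v_k for all other k. Then v' Lorenz dominates v, and the total sums of v' and v are equal. -/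
open Finset Function

namespace Finset

theorem sum_update_eq_add {ι M : Type*} [DecidableEq ι] [AddCommGroup M] (s : Finset ι)
    (f : ι → M) (i : ι) (b : M) :
    ∑ x ∈ s, update f i b x = ∑ x ∈ s, f x + if i ∈ s then b - f i else 0 := by
  split_ifs with hi
  · rw [sum_update_of_mem hi, sum_eq_add_sum_sdiff_singleton_of_mem hi]
    abel
  · rw [sum_update_of_notMem hi, add_zero]

theorem sum_le_sum_of_card_eq {ι M : Type*} [DecidableEq ι] [AddCommMonoid M] [LinearOrder M]
    [IsOrderedAddMonoid M] (f : ι → M) {s t : Finset ι} (hst : t.card = s.card)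
    (hf : ∀ a ∈ s, ∀ b ∉ s, f a ≤ f b) : ∑ x ∈ s, f x ≤ ∑ x ∈ t, f x := by
  have hcard : (s \ t).card = (t \ s).card := by
    have := card_sdiff_add_card_inter s t
    have := card_sdiff_add_card_inter t s
    rw [inter_comm] at this
    omega
  suffices ∑ x ∈ s \ t, f x ≤ ∑ x ∈ t \ s, f x by
    rw [← sum_inter_add_sum_sdiff s t, ← sum_inter_add_sum_sdiff t s, inter_comm]
    exact add_le_add_right this _
  rcases (s \ t).eq_empty_or_nonempty with hempty | hne
  · rw [hempty, card_empty, eq_comm, card_eq_zero] at hcard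
    rw [hempty, hcard]
  obtain ⟨a, ha, hmax⟩ := exists_max_image (s \ t) f hne
  calc ∑ x ∈ s \ t, f x ≤ (s \ t).card • f a := sum_le_card_nsmul _ _ _ hmax
    _ = (t \ s).card • f a := by rw [hcard]
    _ ≤ ∑ x ∈ t \ s, f x :=
      card_nsmul_le_sum _ _ _ fun b hb ↦ hf a (mem_sdiff.1 ha).1 b (mem_sdiff.1 hb).2

end Finset

section Transfer

variable {ι : Type*} [DecidableEq ι]

def pigouDaltonTransfer (v : ι → ℝ) (i j : ι) (ε : ℝ) : ι → ℝ :=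
  update (update v i (v i - ε)) j (v j + ε)

variable {v : ι → ℝ} {i j : ι} {ε : ℝ}

theorem sum_comp_pigouDaltonTransfer (g : ℝ → ℝ) (hij : i ≠ j) (s : Finset ι) :
    ∑ x ∈ s, g (pigouDaltonTransfer v i j ε x) = ∑ x ∈ s, g (v x)
      + (if i ∈ s then g (v i - ε) - g (v i) else 0)
      + (if j ∈ s then g (v j + ε) - g (v j) else 0) := by
  simp only [pigouDaltonTransfer, apply_update (fun _ ↦ g), sum_update_eq_add,
    update_of_ne hij.symm]

theorem sum_pigouDaltonTransfer_eq_add (hij : i ≠ j) (s : Finset ι) :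
    ∑ x ∈ s, pigouDaltonTransfer v i j ε x = ∑ x ∈ s, v x
      + (if i ∈ s then -ε else 0) + (if j ∈ s then ε else 0) := by
  simpa using sum_comp_pigouDaltonTransfer id hij s

theorem sum_pigouDaltonTransfer [Fintype ι] (hij : i ≠ j) :
    ∑ x, pigouDaltonTransfer v i j ε x = ∑ x, v x := by
  simp [sum_pigouDaltonTransfer_eq_add hij]

theorem sum_sq_pigouDaltonTransfer_lt [Fintype ι] (hij : i ≠ j) (hε : 0 < ε)
    (hε' : ε < v i - v j) : ∑ x, pigouDaltonTransfer v i j ε x ^ 2 < ∑ x, v x ^ 2 := by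
  rw [sum_comp_pigouDaltonTransfer (· ^ 2) hij, if_pos (mem_univ i), if_pos (mem_univ j)]
  nlinarith

theorem exists_card_eq_sum_le_sum_pigouDaltonTransfer (hij : i ≠ j) (hε : 0 ≤ ε)
    (hε' : ε ≤ v i - v j) (s : Finset ι) :
    ∃ t : Finset ι, t.card = s.card ∧
      ∑ x ∈ t, v x ≤ ∑ x ∈ s, pigouDaltonTransfer v i j ε x := by
  rw [sum_pigouDaltonTransfer_eq_add hij]
  by_cases hi : i ∈ s <;> by_cases hj : j ∈ s
  · exact ⟨s, rfl, by simp [hi, hj]⟩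
  · have hj' : j ∉ s.erase i := fun h ↦ hj (mem_of_mem_erase h)
    refine ⟨insert j (s.erase i), ?_, ?_⟩
    · rw [card_insert_of_notMem hj', card_erase_add_one hi]
    · rw [sum_insert hj', ← add_sum_erase s v hi]
      simp only [hi, hj, if_true, if_false]
      linarith
  · exact ⟨s, rfl, by simp [hi, hj, hε]⟩
  · exact ⟨s, rfl, by simp [hi, hj]⟩

end Transfer

section Lorenz

variable {d : ℕ}

theorem sum_comp_sortVec (g : ℝ → ℝ) (v : Fin d → ℝ) :
    ∑ k, g (sortVec v k) = ∑ k, g (v k) :=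
  Equiv.sum_comp (Tuple.sort v) (g ∘ v)

theorem lorenzVec_eq_sortVec_add (v : Fin d → ℝ) (k : Fin d) :
    lorenzVec v k = sortVec v k + ∑ l ∈ Iio k, sortVec v l := by
  rw [lorenzVec, ← Iio_insert, sum_insert notMem_Iio_self]

theorem sortVec_eq_of_lorenzVec_eq {v w : Fin d → ℝ} (h : lorenzVec v = lorenzVec w) :
    sortVec v = sortVec w := by
  funext k
  induction k using WellFoundedLT.induction with
  | ind k ih =>
    have hk := congrFun h k
    rw [lorenzVec_eq_sortVec_add, lorenzVec_eq_sortVec_add,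
      sum_congr rfl fun l hl ↦ ih l (mem_Iio.1 hl)] at hk
    exact add_right_cancel hk

theorem lorenzVec_le_sum (v : Fin d → ℝ) (k : Fin d) {s : Finset (Fin d)}
    (hs : s.card = k.val + 1) : lorenzVec v k ≤ ∑ x ∈ s, v x := by
  let σ := Tuple.sort v
  have hsum : ∑ x ∈ s.map σ.symm.toEmbedding, sortVec v x = ∑ x ∈ s, v x := by
    simp [sortVec, σ]
  rw [lorenzVec, ← hsum]
  refine sum_le_sum_of_card_eq _ (by simp [hs]) fun a ha b hb ↦ Tuple.monotone_sort v ?_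
  exact (mem_Iic.1 ha).trans (not_le.1 (mt mem_Iic.2 hb)).le

theorem exists_card_eq_sum_eq_lorenzVec (v : Fin d → ℝ) (k : Fin d) :
    ∃ s : Finset (Fin d), s.card = k.val + 1 ∧ ∑ x ∈ s, v x = lorenzVec v k :=
  ⟨(Iic k).map (Tuple.sort v).toEmbedding, by simp, by simp [lorenzVec, sortVec]⟩

theorem lorenzVec_le_of_forall_exists_sum_le {v w : Fin d → ℝ}
    (h : ∀ s : Finset (Fin d), ∃ t : Finset (Fin d),
      t.card = s.card ∧ ∑ x ∈ t, v x ≤ ∑ x ∈ s, w x)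
    (k : Fin d) : lorenzVec v k ≤ lorenzVec w k := by
  obtain ⟨s, hs, hsum⟩ := exists_card_eq_sum_eq_lorenzVec w k
  obtain ⟨t, ht, hle⟩ := h s
  exact (lorenzVec_le_sum v k (ht.trans hs)).trans (hsum ▸ hle)

end Lorenz

theorem pigou_dalton_general {d : ℕ} (v : Fin d → ℝ) (i j : Fin d) (hij : i ≠ j)
    (ε : ℝ) (hε : 0 < ε) (hε' : ε < v i - v j)
    (v' : Fin d → ℝ)
    (hv' : v' = Function.update (Function.update v i (v i - ε)) j (v j + ε)) :
    LorenzDom v' v ∧ ∑ k, v' k = ∑ k, v k := by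
  obtain rfl : v' = pigouDaltonTransfer v i j ε := hv'
  refine ⟨⟨lorenzVec_le_of_forall_exists_sum_le
    (exists_card_eq_sum_le_sum_pigouDaltonTransfer hij hε.le hε'.le), fun h ↦ ?_⟩,
    sum_pigouDaltonTransfer hij⟩
  have hsq := sum_sq_pigouDaltonTransfer_lt hij hε hε'
  rw [← sum_comp_sortVec (· ^ 2), sortVec_eq_of_lorenzVec_eq h, sum_comp_sortVec (· ^ 2)] at hsq
  exact lt_irrefl _ hsq

theorem pigou_dalton {d : ℕ} (v : Fin d → ℝ) (i j : Fin d) (hij : i ≠ j)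
    (hvij : v j < v i) (ε : ℝ) (hε : 0 < ε) (hε' : ε < v i - v j)
    (v' : Fin d → ℝ)
    (hv' : v' = Function.update (Function.update v i (v i - ε)) j (v j + ε)) :
    LorenzDom v' v ∧ ∑ k, v' k = ∑ k, v k :=
  pigou_dalton_general v i j hij ε hε hε' v' hv'
end
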